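/- For each n ≥ 1 and each transitive frame F = ⟨W,R⟩ with w ∈ W: F, w ⊨ Wid_n^• iff every irreflexive antichain A in the subframe of F generated by w satisfies |A| ≤ n. -/

import Mathlib

/-- A Kripke frame: a set of worlds with a binary relation. -/
structure Frame where
  World : Type
  rel : World → World → Prop

/-- `f` is a reduction (surjective p-morphism) of `F` to `G`. -/
def Reduction (F G : Frame) (f : F.World → G.World) : Prop :=
  Function.Surjective f ∧
  (∀ w u, F.rel w u → G.rel (f w) (f u)) ∧
  (∀ w v, G.rel (f w) v → ∃ u, F.rel w u ∧ f u = v)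

/-- `F` is reducible to `G`. -/
def Reducible (F G : Frame) : Prop := ∃ f, Reduction F G f

/-- The subframe of `F` generated by the point `w`. -/
def Frame.genSub (F : Frame) (w : F.World) : Frame :=
  ⟨{v // Relation.ReflTransGen F.rel w v}, fun a b => F.rel a.1 b.1⟩

/-- Modal formulas over countably many propositional variables. -/
inductive Formula where
  | var : ℕ → Formula
  | bot : Formula
  | imp : Formula → Formula → Formula
  | box : Formula → Formula
deriving DecidableEq

namespace Formula

def neg (a : Formula) : Formula := .imp a .bot
def top : Formula := .imp .bot .bot
def and (a b : Formula) : Formula := neg (.imp a (neg b))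
def or (a b : Formula) : Formula := .imp (neg a) b
def dia (a : Formula) : Formula := neg (.box (neg a))

/-- Finite conjunction of a list of formulas. -/
def bigConj (l : List Formula) : Formula := l.foldr and top

/-- Finite disjunction of a list of formulas. -/
def bigDisj (l : List Formula) : Formula := l.foldr or .bot

end Formula

/-- Kripke satisfaction of a formula at a world of `F` under valuation `V`. -/
def Sat (F : Frame) (V : ℕ → F.World → Prop) : F.World → Formula → Prop
  | w, .var n => V n w
  | _, .bot => False
  | w, .imp a b => Sat F V w a → Sat F V w b
  | w, .box a => ∀ u, F.rel w u → Sat F V u a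

/-- `φ` is valid at the point `w` of `F` (true under all valuations). -/
def SatAll (F : Frame) (w : F.World) (φ : Formula) : Prop := ∀ V, Sat F V w φ

/-- `φ` is valid in the frame `F`. -/
def Valid (F : Frame) (φ : Formula) : Prop := ∀ V w, Sat F V w φ

/-- The formula `Wid_n^•`, with `p_i` encoded as variable `i`:
`⋀_{i≤n} ◇(p_i ∧ □¬p_i) → ⋁_{0 ≤ i ≠ j ≤ n} ◇(p_i ∧ (p_j ∨ ◇p_j))`. -/
def widBul (n : ℕ) : Formula :=
  .imp
    (Formula.bigConj ((List.finRange (n + 1)).map fun i =>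
      Formula.dia (.and (.var i) (.box (Formula.neg (.var i))))))
    (Formula.bigDisj ((List.finRange (n + 1)).flatMap fun i =>
      (List.finRange (n + 1)).flatMap fun j =>
        if i = j then []
        else [Formula.dia (.and (.var i) (.or (.var j) (Formula.dia (.var j))))]))

/-- `A` is an antichain w.r.t. `R`: distinct elements are `R`-incomparable. -/
def AntichainIn {W : Type*} (R : W → W → Prop) (A : Set W) : Prop :=
  ∀ u ∈ A, ∀ v ∈ A, u ≠ v → ¬ R u v ∧ ¬ R v u

/-!
An irreflexive antichain `a_0, …, a_n` of successors of `w` refutes `Wid_n^•` under the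
valuation making `p_i` true exactly at `a_i`. Conversely, under any valuation the antecedent
picks points `u_i` satisfying `p_i` none of whose successors satisfies `p_i`; if the consequent
fails, these points are pairwise distinct and see neither each other nor themselves. Since
`n ≥ 1`, such an antichain cannot contain `w` itself, which is how the root of the generated
subframe is accounted for.
-/

def IsIrreflAntichainFamily {ι W : Type*} (R : W → W → Prop) (u : ι → W) : Prop :=
  Function.Injective u ∧ ∀ i j, ¬ R (u i) (u j)

section Semantics

variable {F : Frame} {V : ℕ → F.World → Prop} {w : F.World} {a b : Formula}

lemma sat_and : Sat F V w (Formula.and a b) ↔ Sat F V w a ∧ Sat F V w b := by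
  simp only [Formula.and, Formula.neg, Sat]; tauto

lemma sat_or : Sat F V w (Formula.or a b) ↔ Sat F V w a ∨ Sat F V w b := by
  simp only [Formula.or, Formula.neg, Sat]; tauto

lemma sat_dia : Sat F V w (Formula.dia a) ↔ ∃ u, F.rel w u ∧ Sat F V u a := by
  simp [Formula.dia, Formula.neg, Sat]

lemma sat_bigConj {l : List Formula} :
    Sat F V w (Formula.bigConj l) ↔ ∀ φ ∈ l, Sat F V w φ := by
  induction l with
  | nil => simp [Formula.bigConj, Formula.top, Sat]
  | cons x xs ih => simp [Formula.bigConj, ← ih, sat_and]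

lemma sat_bigDisj {l : List Formula} :
    Sat F V w (Formula.bigDisj l) ↔ ∃ φ ∈ l, Sat F V w φ := by
  induction l with
  | nil => simp [Formula.bigDisj, Sat]
  | cons x xs ih => simp [Formula.bigDisj, ← ih, sat_or]

lemma sat_widBul_iff {n : ℕ} :
    Sat F V w (widBul n) ↔
      ((∀ i : Fin (n + 1), ∃ u, F.rel w u ∧ V i u ∧ ∀ v, F.rel u v → ¬ V i v) →
        ∃ i j : Fin (n + 1), i ≠ j ∧
          ∃ u, F.rel w u ∧ V i u ∧ (V j u ∨ ∃ v, F.rel u v ∧ V j v)) := by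
  simp [widBul, Sat, sat_bigConj, sat_bigDisj, sat_dia, sat_and, sat_or, Formula.neg, Fin.val_inj]

end Semantics

lemma satAll_widBul_iff {F : Frame} {w : F.World} {n : ℕ} :
    SatAll F w (widBul n) ↔
      ¬ ∃ u : Fin (n + 1) → F.World, IsIrreflAntichainFamily F.rel u ∧ ∀ i, F.rel w (u i) := by
  constructor
  · rintro hvalid ⟨u, ⟨hinj, hnot⟩, hwu⟩
    set V : ℕ → F.World → Prop := fun k v => ∃ i : Fin (n + 1), (i : ℕ) = k ∧ v = u i
    have hV : ∀ (i : Fin (n + 1)) v, V i v ↔ v = u i := fun i v =>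
      ⟨fun ⟨_, hi, hv⟩ => Fin.ext hi ▸ hv, fun hv => ⟨i, rfl, hv⟩⟩
    obtain ⟨i, j, hij, x, -, hxi, hxj⟩ := sat_widBul_iff.mp (hvalid V) fun i =>
      ⟨u i, hwu i, (hV i _).mpr rfl, fun v hv hvi => hnot i i ((hV i v).mp hvi ▸ hv)⟩
    obtain rfl := (hV i x).mp hxi
    rcases hxj with hxj | ⟨v, hv, hvj⟩
    · exact hij (hinj ((hV j _).mp hxj))
    · exact hnot i j ((hV j v).mp hvj ▸ hv)
  · intro hno V
    refine sat_widBul_iff.mpr fun hant => ?_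
    choose u hwu hVu hbox using hant
    by_contra hcons
    refine hno ⟨u, ⟨fun i j huij => ?_, fun i j hij => ?_⟩, hwu⟩
    · by_contra hij
      exact hcons ⟨i, j, hij, u i, hwu i, hVu i, Or.inl (huij ▸ hVu j)⟩
    · rcases eq_or_ne i j with rfl | hne
      · exact hbox i (u i) hij (hVu i)
      · exact hcons ⟨i, j, hne, u i, hwu i, hVu i, Or.inr ⟨u j, hij, hVu j⟩⟩

lemma antichainIn_and_irrefl_iff {W : Type*} {R : W → W → Prop} {A : Set W} :
    (AntichainIn R A ∧ ∀ a ∈ A, ¬ R a a) ↔ ∀ a ∈ A, ∀ b ∈ A, ¬ R a b := by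
  constructor
  · rintro ⟨hanti, hirr⟩ a ha b hb
    rcases eq_or_ne a b with rfl | hab
    exacts [hirr a ha, (hanti a ha b hb hab).1]
  · intro h
    exact ⟨fun a ha b hb _ => ⟨h a ha b hb, h b hb a ha⟩, fun a ha => h a ha a ha⟩

lemma natCast_lt_mk_iff {α : Type} {n : ℕ} :
    (n : Cardinal) < Cardinal.mk α ↔ Nonempty (Fin (n + 1) ↪ α) := by
  rw [← Order.succ_le_iff, Cardinal.succ_natCast, ← Nat.cast_add_one, ← Cardinal.mk_fin (n + 1),
    Cardinal.le_def]

lemma forall_irrefl_antichain_card_le_iff {W : Type} {R : W → W → Prop} {S : Set W} {n : ℕ} :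
    (∀ A ⊆ S, AntichainIn R A → (∀ a ∈ A, ¬ R a a) → Cardinal.mk A ≤ n) ↔
      ¬ ∃ u : Fin (n + 1) → W, IsIrreflAntichainFamily R u ∧ ∀ i, u i ∈ S := by
  constructor
  · rintro hcard ⟨u, ⟨hinj, hnot⟩, huS⟩
    have hrange_anti : AntichainIn R (Set.range u) ∧ ∀ a ∈ Set.range u, ¬ R a a :=
      antichainIn_and_irrefl_iff.mpr <| by simpa [Set.forall_mem_range] using hnot
    have hrange := hcard (Set.range u) (Set.range_subset_iff.mpr huS) hrange_anti.1 hrange_anti.2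
    rw [Cardinal.mk_range_eq u hinj, Cardinal.mk_fin, Nat.cast_le] at hrange
    omega
  · intro hno A hAS hanti hirr
    by_contra! hlt
    obtain ⟨f⟩ := natCast_lt_mk_iff.mp hlt
    have hnot := antichainIn_and_irrefl_iff.mp ⟨hanti, hirr⟩
    exact hno ⟨fun i => f i, ⟨Subtype.val_injective.comp f.injective,
      fun i j => hnot _ (f i).2 _ (f j).2⟩, fun i => hAS (f i).2⟩

lemma IsIrreflAntichainFamily.rel_of_eq_or_rel {W : Type*} {R : W → W → Prop} {w : W} {n : ℕ}
    (hn : 1 ≤ n) {u : Fin (n + 1) → W} (hu : IsIrreflAntichainFamily R u)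
    (hmem : ∀ i, u i = w ∨ R w (u i)) (i : Fin (n + 1)) : R w (u i) := by
  refine (hmem i).resolve_left fun hiw => ?_
  have : Nontrivial (Fin (n + 1)) := Fin.nontrivial_iff_two_le.mpr (by omega)
  obtain ⟨j, hji⟩ := exists_ne i
  rcases hmem j with hjw | hwj
  · exact hji (hu.1 (hjw.trans hiw.symm))
  · exact hu.2 i j (hiw ▸ hwj)

theorem widBul_frame_condition_general (n : ℕ) (hn : 1 ≤ n) (F : Frame) (w : F.World) :
    SatAll F w (widBul n) ↔
      ∀ A : Set F.World, A ⊆ {v | v = w ∨ F.rel w v} → AntichainIn F.rel A →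
        (∀ a ∈ A, ¬ F.rel a a) → Cardinal.mk A ≤ (n : Cardinal) := by
  rw [satAll_widBul_iff, forall_irrefl_antichain_card_le_iff]
  exact not_congr <| exists_congr fun u => and_congr_right fun hu =>
    ⟨fun hwu i => Or.inr (hwu i), hu.rel_of_eq_or_rel hn⟩

/-- Frame condition for `Wid_n^•`: it is valid at `w` iff every irreflexive
antichain in the subframe generated by `w` has at most `n` elements. -/
theorem widBul_frame_condition (n : ℕ) (hn : 1 ≤ n) (F : Frame)
    (htr : ∀ a b c, F.rel a b → F.rel b c → F.rel a c) (w : F.World) :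
    SatAll F w (widBul n) ↔
      ∀ A : Set F.World, A ⊆ {v | v = w ∨ F.rel w v} → AntichainIn F.rel A →
        (∀ a ∈ A, ¬ F.rel a a) → Cardinal.mk A ≤ (n : Cardinal) :=
  widBul_frame_condition_general n hn F w
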